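/- For every host graph H there exists a Greedy Equilibrium s in the global edge-buying setting whose social cost equals the social cost of a social optimum, i.e., SC_H(s) = SC_H(s*_H). Consequently, the Price of Stability with respect to Greedy Equilibria in the global setting equals 1. -/

import Mathlib

namespace TNCG

/-- A time edge: an undirected edge together with a time label. -/
abbrev TimeEdge (V : Type) := Sym2 V × ℕ

/-- A temporal host graph with terminals: the underlying graph is complete, every
(non-loop) edge carries a nonempty finite set of time labels, and there is a
nonempty set of terminal nodes. -/
structure HostGraph (V : Type) [Fintype V] [DecidableEq V] where
  labels : Sym2 V → Finset ℕ
  labels_nonempty : ∀ e : Sym2 V, ¬ e.IsDiag → (labels e).Nonempty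
  labels_diag : ∀ e : Sym2 V, e.IsDiag → labels e = ∅
  terminals : Finset V
  terminals_nonempty : terminals.Nonempty

variable {V : Type} [Fintype V] [DecidableEq V]

/-- Temporal reachability within a set `A` of time edges: `ReachFrom A t u w` holds if
there is a temporal walk from `u` to `w` all of whose labels are `≥ t` and non-decreasing. -/
inductive ReachFrom (A : Finset (TimeEdge V)) : ℕ → V → V → Prop
  | refl (t : ℕ) (v : V) : ReachFrom A t v v
  | step {t : ℕ} {u v w : V} (l : ℕ) (hle : t ≤ l) (he : (s(u, v), l) ∈ A)
      (htail : ReachFrom A l v w) : ReachFrom A t u w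

/-- `u` reaches `w` via a temporal path in the time-edge set `A`. -/
def Reaches (A : Finset (TimeEdge V)) (u w : V) : Prop := ReachFrom A 0 u w

/-- A strategy profile: each agent buys a finite set of time edges. -/
abbrev Profile (V : Type) := V → Finset (TimeEdge V)

/-- The set of time edges of the created graph `G(s)`. -/
def built (s : Profile V) : Finset (TimeEdge V) := Finset.univ.biUnion s

/-- The two edge-buying settings. -/
inductive Setting | loc | glob
deriving DecidableEq

/-- The two equilibrium types. -/
inductive EqType | nash | greedy
deriving DecidableEq

/-- A time edge of the host graph. -/
def HostGraph.ValidTimeEdge (H : HostGraph V) (p : TimeEdge V) : Prop :=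
  p.2 ∈ H.labels p.1

/-- Which strategies are allowed for agent `v` in a given setting: in the local setting all
bought time edges must be incident to `v`; in the global setting there is no restriction. -/
def Allowed (H : HostGraph V) : Setting → V → Finset (TimeEdge V) → Prop
  | Setting.loc, v, S => ∀ p ∈ S, H.ValidTimeEdge p ∧ v ∈ p.1
  | Setting.glob, _, S => ∀ p ∈ S, H.ValidTimeEdge p

open Classical in
/-- The cost of agent `v`: the number of bought time edges plus `C` times the number of
unreached terminals. -/
noncomputable def cost (H : HostGraph V) (C : ℝ) (s : Profile V) (v : V) : ℝ :=
  ((s v).card : ℝ) + C * ((H.terminals.filter fun t => ¬ Reaches (built s) v t).card : ℝ)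

/-- The profile obtained from `s` by replacing `v`'s strategy with `S'`. -/
def update (s : Profile V) (v : V) (S' : Finset (TimeEdge V)) : Profile V :=
  fun u => if u = v then S' else s u

/-- `S'` is obtained from `S` by adding or removing a single time edge. -/
def GreedyDev (S S' : Finset (TimeEdge V)) : Prop :=
  (∃ p, p ∉ S ∧ S' = insert p S) ∨ (∃ p ∈ S, S' = S.erase p)

/-- `s` is an equilibrium (Nash or Greedy) in the given setting: every strategy is allowed, and
no agent has an (allowed, and for Greedy Equilibria single-time-edge) improving response. -/
def IsEquilibrium (H : HostGraph V) (C : ℝ) (st : Setting) (et : EqType) (s : Profile V) :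
    Prop :=
  (∀ v, Allowed H st v (s v)) ∧
    ∀ v S', Allowed H st v S' → (et = EqType.greedy → GreedyDev (s v) S') →
      ¬ cost H C (update s v S') v < cost H C s v

/-- The social cost of a strategy profile. -/
noncomputable def socialCost (H : HostGraph V) (C : ℝ) (s : Profile V) : ℝ :=
  ∑ v, cost H C s v

/-- A social optimum: an allowed strategy profile of minimum social cost. -/
def IsSocialOptimum (H : HostGraph V) (C : ℝ) (st : Setting) (s : Profile V) : Prop :=
  (∀ v, Allowed H st v (s v)) ∧
    ∀ s' : Profile V, (∀ v, Allowed H st v (s' v)) → socialCost H C s ≤ socialCost H C s'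

/-- The lifetime of a host graph: its largest time label. -/
def HostGraph.maxLabel (H : HostGraph V) : ℕ :=
  Finset.univ.sup fun p : V × V => (H.labels s(p.1, p.2)).sup id

/-- The simple graph whose edges are the host edges carrying the maximum label. -/
def maxLabelGraph (H : HostGraph V) : SimpleGraph V where
  Adj u v := u ≠ v ∧ H.maxLabel ∈ H.labels s(u, v)
  symm := by
    constructor
    intro u v h
    exact ⟨Ne.symm h.1, by rw [Sym2.eq_swap]; exact h.2⟩
  loopless := ⟨fun v h => h.1 rfl⟩

/-- The simple graph underlying a set of time edges. -/
def edgesGraph (A : Finset (TimeEdge V)) : SimpleGraph V where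
  Adj u v := u ≠ v ∧ ∃ l, (s(u, v), l) ∈ A
  symm := by
    constructor
    rintro u v ⟨h, l, hl⟩
    exact ⟨Ne.symm h, l, by rw [Sym2.eq_swap]; exact hl⟩
  loopless := ⟨fun v h => h.1 rfl⟩

/-- A terminal spanner: a valid time-edge set in which every node reaches every terminal. -/
def IsTerminalSpanner (H : HostGraph V) (A : Finset (TimeEdge V)) : Prop :=
  (∀ p ∈ A, H.ValidTimeEdge p) ∧ ∀ v : V, ∀ t ∈ H.terminals, Reaches A v t

/-- An inclusion minimal terminal spanner. -/
def IsMinimalTerminalSpanner (H : HostGraph V) (A : Finset (TimeEdge V)) : Prop :=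
  IsTerminalSpanner H A ∧ ∀ p ∈ A, ¬ IsTerminalSpanner H (A.erase p)

/-- A host graph is simple if every (non-loop) edge carries exactly one time label. -/
def HostGraph.Simple (H : HostGraph V) : Prop :=
  ∀ e : Sym2 V, ¬ e.IsDiag → (H.labels e).card = 1



/-! ### Auxiliary machinery for the proof -/

open Classical in
/-- Number of terminals that `v` does not reach in the time-edge set `A`. -/
noncomputable def nu (H : HostGraph V) (A : Finset (TimeEdge V)) (v : V) : ℕ :=
  (H.terminals.filter fun t => ¬ Reaches A v t).card

lemma reachFrom_mono {A B : Finset (TimeEdge V)} (hAB : A ⊆ B) {t : ℕ} {u w : V}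
    (h : ReachFrom A t u w) : ReachFrom B t u w := by
  induction h with
  | refl t v => exact .refl t v
  | step l hle he _ ih => exact .step l hle (hAB he) ih

lemma nu_mono (H : HostGraph V) {A B : Finset (TimeEdge V)} (hAB : A ⊆ B) (v : V) :
    nu H B v ≤ nu H A v := by
  classical
  apply Finset.card_le_card
  intro t ht
  simp only [Finset.mem_filter] at ht ⊢
  exact ⟨ht.1, fun h => ht.2 (reachFrom_mono hAB h)⟩

/-- The finite set of all valid time edges of a host graph. -/
noncomputable def validEdges (H : HostGraph V) : Finset (TimeEdge V) :=
  Finset.univ.biUnion fun e : Sym2 V => (H.labels e).image (Prod.mk e)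

lemma mem_validEdges {H : HostGraph V} {p : TimeEdge V} :
    p ∈ validEdges H ↔ H.ValidTimeEdge p := by
  obtain ⟨e, l⟩ := p
  constructor
  · simp only [validEdges, Finset.mem_biUnion, Finset.mem_image, Finset.mem_univ, true_and]
    rintro ⟨a, b, hb, h⟩
    obtain ⟨rfl, rfl⟩ := Prod.mk.injEq a b e l ▸ h
    exact hb
  · intro h
    exact Finset.mem_biUnion.2 ⟨e, Finset.mem_univ _, Finset.mem_image.2 ⟨l, h, rfl⟩⟩

/-- For every host graph there is a Greedy Equilibrium in the global setting
whose social cost equals the social cost of a social optimum; hence the Price of Stability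
for Greedy Equilibria in the global setting is 1. -/
theorem GE_PoS_one {V : Type} [Fintype V] [DecidableEq V] (H : HostGraph V)
    (C : ℝ) (hC : 1 < C) :
    ∃ s : Profile V, IsEquilibrium H C Setting.glob EqType.greedy s ∧
      ∀ sOpt : Profile V, IsSocialOptimum H C Setting.glob sOpt →
        socialCost H C s = socialCost H C sOpt := by
  classical
  set f : Finset (TimeEdge V) → ℝ := fun B => (B.card : ℝ) + C * ∑ v, (nu H B v : ℝ) with hf
  obtain ⟨A, hAmem, hAmin⟩ := Finset.exists_min_image (validEdges H).powerset f
    ⟨∅, Finset.empty_mem_powerset _⟩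
  rw [Finset.mem_powerset] at hAmem
  have hAvalid : ∀ p ∈ A, H.ValidTimeEdge p := fun p hp => mem_validEdges.1 (hAmem hp)
  have hCpos : (0:ℝ) < C := lt_trans one_pos hC
  have hadd : ∀ p : TimeEdge V, H.ValidTimeEdge p → ∀ v, nu H (insert p A) v = nu H A v := by
    intro p hp v
    refine le_antisymm (nu_mono H (Finset.subset_insert p A) v) ?_
    by_contra hlt
    push_neg at hlt
    have hsum : (∑ u, nu H (insert p A) u) + 1 ≤ ∑ u, nu H A u := by
      have := Finset.sum_lt_sum (fun u (_ : u ∈ Finset.univ) =>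
        nu_mono H (Finset.subset_insert p A) u) ⟨v, Finset.mem_univ v, hlt⟩
      omega
    have hmin := hAmin (insert p A)
      (Finset.mem_powerset.2 (Finset.insert_subset (mem_validEdges.2 hp) hAmem))
    have hcard : ((insert p A).card : ℝ) ≤ (A.card : ℝ) + 1 := by
      exact_mod_cast Finset.card_insert_le p A
    have hsumR : (∑ u, (nu H (insert p A) u : ℝ)) + 1 ≤ ∑ u, (nu H A u : ℝ) := by
      exact_mod_cast hsum
    simp only [hf] at hmin
    have h2 : C * ((∑ u, (nu H (insert p A) u : ℝ)) + 1) ≤ C * ∑ u, (nu H A u : ℝ) :=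
      mul_le_mul_of_nonneg_left hsumR hCpos.le
    rw [mul_add, mul_one] at h2
    linarith
  have hrem : ∀ p ∈ A, ∃ v, nu H A v < nu H (A.erase p) v := by
    intro p hp
    by_contra hno
    push_neg at hno
    have heq : ∀ v, (nu H (A.erase p) v : ℝ) = (nu H A v : ℝ) := by
      intro v
      exact_mod_cast le_antisymm (hno v) (nu_mono H (Finset.erase_subset p A) v)
    have hmin := hAmin (A.erase p)
      (Finset.mem_powerset.2 ((Finset.erase_subset p A).trans hAmem))
    have hcard : ((A.erase p).card : ℝ) = (A.card : ℝ) - 1 := Finset.cast_card_erase_of_mem hp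
    have hsums : (∑ u, (nu H (A.erase p) u : ℝ)) = ∑ u, (nu H A u : ℝ) :=
      Finset.sum_congr rfl (fun u _ => heq u)
    simp only [hf] at hmin
    rw [hcard, hsums] at hmin
    linarith
  set w : TimeEdge V → V := fun p =>
    (if h : ∃ v, nu H A v < nu H (A.erase p) v then h.choose else H.terminals_nonempty.choose)
    with hwdef
  have hw : ∀ p ∈ A, nu H A (w p) < nu H (A.erase p) (w p) := by
    intro p hp
    have h := hrem p hp
    simp only [hwdef, dif_pos h]
    exact h.choose_spec
  set s : Profile V := fun v => A.filter (fun p => w p = v) with hs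
  have hsubA : ∀ v, s v ⊆ A := fun v => Finset.filter_subset _ _
  have hmem_s : ∀ p ∈ A, p ∈ s (w p) := fun p hp => Finset.mem_filter.2 ⟨hp, rfl⟩
  have hbuilt : built s = A := by
    ext q
    simp only [built, Finset.mem_biUnion, Finset.mem_univ, true_and]
    constructor
    · rintro ⟨u, hq⟩; exact hsubA u hq
    · intro hq; exact ⟨w q, hmem_s q hq⟩
  have hcost : ∀ (s' : Profile V) (v : V),
      cost H C s' v = ((s' v).card : ℝ) + C * (nu H (built s') v : ℝ) := fun s' v => rfl
  have hEq : IsEquilibrium H C Setting.glob EqType.greedy s := by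
    refine ⟨fun v p hp => hAvalid p (hsubA v hp), ?_⟩
    intro v S' hall hgd
    rcases hgd rfl with ⟨p, hpn, rfl⟩ | ⟨p, hpm, rfl⟩
    · have hpv : H.ValidTimeEdge p := hall p (Finset.mem_insert_self p (s v))
      have hb : built (update s v (insert p (s v))) = insert p A := by
        rw [← hbuilt]
        ext q
        simp only [built, update, Finset.mem_biUnion, Finset.mem_univ, true_and,
          Finset.mem_insert]
        constructor
        · rintro ⟨u, hu⟩
          by_cases h : u = v
          · rw [if_pos h] at hu
            rcases Finset.mem_insert.1 hu with h1 | h1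
            · exact Or.inl h1
            · exact Or.inr ⟨v, h1⟩
          · rw [if_neg h] at hu
            exact Or.inr ⟨u, hu⟩
        · rintro (rfl | ⟨u, hu⟩)
          · exact ⟨v, by rw [if_pos rfl]; exact Finset.mem_insert_self _ _⟩
          · by_cases h : u = v
            · subst h
              exact ⟨u, by rw [if_pos rfl]; exact Finset.mem_insert_of_mem hu⟩
            · exact ⟨u, by rw [if_neg h]; exact hu⟩
      intro hlt
      have hupd : update s v (insert p (s v)) v = insert p (s v) := if_pos rfl
      rw [hcost, hcost, hb, hadd p hpv v, hbuilt, hupd,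
        Finset.card_insert_of_notMem hpn] at hlt
      push_cast at hlt
      linarith
    · have hpA : p ∈ A := hsubA v hpm
      have hwp : w p = v := (Finset.mem_filter.1 hpm).2
      have hb : built (update s v ((s v).erase p)) = A.erase p := by
        ext q
        simp only [built, update, Finset.mem_biUnion, Finset.mem_univ, true_and]
        constructor
        · rintro ⟨u, hu⟩
          by_cases h : u = v
          · rw [if_pos h] at hu
            exact Finset.mem_erase.2 ⟨(Finset.mem_erase.1 hu).1,
              hsubA v (Finset.mem_erase.1 hu).2⟩
          · rw [if_neg h] at hu
            refine Finset.mem_erase.2 ⟨?_, hsubA u hu⟩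
            rintro rfl
            exact h ((hwp.symm.trans (Finset.mem_filter.1 hu).2).symm)
        · intro hq
          obtain ⟨hqp, hqA⟩ := Finset.mem_erase.1 hq
          by_cases h : w q = v
          · refine ⟨v, ?_⟩
            rw [if_pos rfl]
            exact Finset.mem_erase.2 ⟨hqp, h ▸ hmem_s q hqA⟩
          · exact ⟨w q, by rw [if_neg h]; exact hmem_s q hqA⟩
      have hnu : nu H A v < nu H (A.erase p) v := hwp ▸ hw p hpA
      intro hlt
      have hupd : update s v ((s v).erase p) v = (s v).erase p := if_pos rfl
      rw [hcost, hcost, hb, hbuilt, hupd, Finset.card_erase_of_mem hpm] at hlt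
      have hc1 : 1 ≤ (s v).card := Finset.card_pos.2 ⟨p, hpm⟩
      have hcardR : (((s v).card - 1 : ℕ) : ℝ) = ((s v).card : ℝ) - 1 := by
        push_cast [hc1]
        ring
      have hnuR : (nu H A v : ℝ) + 1 ≤ (nu H (A.erase p) v : ℝ) := by
        exact_mod_cast hnu
      have h2 : C * ((nu H A v : ℝ) + 1) ≤ C * (nu H (A.erase p) v : ℝ) :=
        mul_le_mul_of_nonneg_left hnuR hCpos.le
      rw [mul_add, mul_one] at h2
      rw [hcardR] at hlt
      linarith
  refine ⟨s, hEq, ?_⟩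
  intro sOpt hOpt
  have h1 : socialCost H C sOpt ≤ socialCost H C s := hOpt.2 s hEq.1
  have hSCs : socialCost H C s = f A := by
    simp only [socialCost, hcost, hbuilt, hf]
    rw [Finset.sum_add_distrib, ← Finset.mul_sum, ← Nat.cast_sum]
    congr 2
    exact (Finset.card_eq_sum_card_fiberwise (fun p (_ : p ∈ A) => Finset.mem_univ (w p))).symm
  have hSCopt : f A ≤ socialCost H C sOpt := by
    have hBsub : built sOpt ⊆ validEdges H := by
      intro q hq
      simp only [built, Finset.mem_biUnion] at hq
      obtain ⟨u, -, hqu⟩ := hq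
      exact mem_validEdges.2 (hOpt.1 u q hqu)
    have hfB := hAmin (built sOpt) (Finset.mem_powerset.2 hBsub)
    refine hfB.trans ?_
    simp only [socialCost, hcost, hf]
    rw [Finset.sum_add_distrib, ← Finset.mul_sum]
    have hc : ((built sOpt).card : ℝ) ≤ ∑ v, ((sOpt v).card : ℝ) := by
      exact_mod_cast Finset.card_biUnion_le
    linarith
  linarith


end TNCG
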